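/- Let G be a generator of a Grothendieck category 𝒢 and let P be a chain complex over 𝒢. Then P is isomorphic to a coproduct ⊕_{n∈ℤ} D^n(P_n) of disks on G-projective objects if and only if P is a contractible complex all of whose components are G-projective. -/

import Mathlib

open CategoryTheory CategoryTheory.Limits Opposite ZeroObject

variable {𝒢 : Type*} [Category 𝒢] [Abelian 𝒢]

/-- A short exact sequence in `𝒢` is `G`-exact if it remains a short exact sequence
after applying `Hom(G,-)`. -/
def IsGExact (G : 𝒢) (S : ShortComplex 𝒢) : Prop :=
  S.ShortExact ∧ (S.map (preadditiveCoyoneda.obj (op G))).ShortExact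

/-- An object `Q` is `G`-projective if `Hom(Q,-)` takes every `G`-exact short exact
sequence to a short exact sequence of abelian groups. -/
def GProjective (G Q : 𝒢) : Prop :=
  ∀ S : ShortComplex 𝒢, IsGExact G S → (S.map (preadditiveCoyoneda.obj (op Q))).ShortExact

/-- The disk complex `D^n(A)`, with `A` in degrees `n` and `n-1`, identity differential
between them, and `0` elsewhere. -/
noncomputable def disk (A : 𝒢) (n : ℤ) : HomologicalComplex 𝒢 (ComplexShape.down ℤ) where
  X m := if m = n ∨ m = n - 1 then A else 0
  d i j :=
    if h : i = n ∧ j = n - 1 then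
      eqToHom (if_pos (Or.inl h.1)) ≫ eqToHom (if_pos (Or.inr h.2)).symm
    else 0
  shape i j hij := by
    try dsimp only
    rw [dif_neg]
    rintro ⟨rfl, rfl⟩
    exact hij (by simp [ComplexShape.down])
  d_comp_d' i j k _ _ := by
    try dsimp only
    by_cases h2 : j = n ∧ k = n - 1
    · obtain ⟨hj, hk⟩ := h2
      rw [dif_neg (by rintro ⟨h1a, h1b⟩; omega : ¬(i = n ∧ j = n - 1)), zero_comp]
    · rw [dif_neg h2, comp_zero]


section GProj
variable {G : 𝒢}

lemma map_coyoneda_f_apply (S : ShortComplex 𝒢) (Q : 𝒢) (φ : Q ⟶ S.X₁) :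
    (S.map (preadditiveCoyoneda.obj (op Q))).f φ = φ ≫ S.f := rfl

lemma map_coyoneda_g_apply (S : ShortComplex 𝒢) (Q : 𝒢) (φ : Q ⟶ S.X₂) :
    (S.map (preadditiveCoyoneda.obj (op Q))).g φ = φ ≫ S.g := rfl

lemma GProjective.of_retract {Q R : 𝒢} (i : Q ⟶ R) (r : R ⟶ Q) (hir : i ≫ r = 𝟙 Q)
    (hR : GProjective G R) : GProjective G Q := by
  intro S hS
  have hRS := hR S hS
  have exactR := hRS.exact
  rw [ShortComplex.ab_exact_iff] at exactR
  have monoR := (AddCommGrpCat.mono_iff_injective _).1 hRS.mono_f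
  have epiR := (AddCommGrpCat.epi_iff_surjective _).1 hRS.epi_g
  have mono : Mono (S.map (preadditiveCoyoneda.obj (op Q))).f := by
    rw [AddCommGrpCat.mono_iff_injective]
    intro (a : Q ⟶ S.X₁) (b : Q ⟶ S.X₁) hab
    have : (r ≫ a) ≫ S.f = (r ≫ b) ≫ S.f := by
      rw [Category.assoc, Category.assoc]
      exact congrArg (fun x => r ≫ x) hab
    have h2 : (r ≫ a : R ⟶ S.X₁) = r ≫ b := monoR this
    calc a = i ≫ r ≫ a := by rw [← Category.assoc, hir, Category.id_comp]
    _ = i ≫ r ≫ b := by rw [h2]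
    _ = b := by rw [← Category.assoc, hir, Category.id_comp]
  have epi : Epi (S.map (preadditiveCoyoneda.obj (op Q))).g := by
    rw [AddCommGrpCat.epi_iff_surjective]
    intro (ψ : Q ⟶ S.X₃)
    obtain ⟨(β : R ⟶ S.X₂), hβ⟩ := epiR (r ≫ (ψ : Q ⟶ S.X₃))
    refine ⟨i ≫ β, ?_⟩
    have : (β : R ⟶ S.X₂) ≫ S.g = r ≫ ψ := hβ
    show (i ≫ β) ≫ S.g = ψ
    rw [Category.assoc, this, ← Category.assoc, hir, Category.id_comp]
  refine ⟨?_⟩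
  · rw [ShortComplex.ab_exact_iff]
    intro (x₂ : Q ⟶ S.X₂) hx₂
    have : (r ≫ (x₂ : Q ⟶ S.X₂)) ≫ S.g = 0 := by
      rw [Category.assoc]
      have : (x₂ : Q ⟶ S.X₂) ≫ S.g = 0 := hx₂
      rw [this, Limits.comp_zero]
    obtain ⟨(y : R ⟶ S.X₁), hy⟩ := exactR (r ≫ x₂) this
    refine ⟨i ≫ y, ?_⟩
    have hy' : (y : R ⟶ S.X₁) ≫ S.f = r ≫ x₂ := hy
    show (i ≫ y) ≫ S.f = x₂
    rw [Category.assoc, hy', ← Category.assoc, hir, Category.id_comp]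

lemma GProjective.of_iso {Q R : 𝒢} (e : Q ≅ R) (hR : GProjective G R) : GProjective G Q :=
  hR.of_retract e.hom e.inv e.hom_inv_id

lemma gprojective_of_isZero {Q : 𝒢} (hQ : IsZero Q) : GProjective G Q := by
  intro S _
  have mono : Mono (S.map (preadditiveCoyoneda.obj (op Q))).f := by
    rw [AddCommGrpCat.mono_iff_injective]
    intro a b _
    exact hQ.eq_of_src a b
  have epi : Epi (S.map (preadditiveCoyoneda.obj (op Q))).g := by
    rw [AddCommGrpCat.epi_iff_surjective]
    intro y
    exact ⟨0, hQ.eq_of_src _ _⟩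
  refine ⟨?_⟩
  rw [ShortComplex.ab_exact_iff]
  intro x₂ _
  exact ⟨0, hQ.eq_of_src _ _⟩

lemma GProjective.sigma [HasColimits 𝒢] {ι : Type} (fam : ι → 𝒢)
    (h : ∀ i, GProjective G (fam i)) : GProjective G (∐ fam) := by
  intro S hS
  have hc := fun i => h i S hS
  have exactC := fun i => (ShortComplex.ab_exact_iff _).1 (hc i).exact
  have monoC := fun i => (AddCommGrpCat.mono_iff_injective _).1 (hc i).mono_f
  have epiC := fun i => (AddCommGrpCat.epi_iff_surjective _).1 (hc i).epi_g
  have mono : Mono (S.map (preadditiveCoyoneda.obj (op (∐ fam)))).f := by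
    rw [AddCommGrpCat.mono_iff_injective]
    intro (a : ∐ fam ⟶ S.X₁) (b : ∐ fam ⟶ S.X₁) hab
    have hab' : (a : ∐ fam ⟶ S.X₁) ≫ S.f = b ≫ S.f := hab
    apply Sigma.hom_ext
    intro i
    apply monoC i
    show (Sigma.ι fam i ≫ a) ≫ S.f = (Sigma.ι fam i ≫ b) ≫ S.f
    rw [Category.assoc, Category.assoc, hab']
  have epi : Epi (S.map (preadditiveCoyoneda.obj (op (∐ fam)))).g := by
    rw [AddCommGrpCat.epi_iff_surjective]
    intro ψ
    have := fun i => epiC i (Sigma.ι fam i ≫ (ψ : ∐ fam ⟶ S.X₃))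
    choose β hβ using this
    refine ⟨Sigma.desc β, ?_⟩
    show Sigma.desc β ≫ S.g = ψ
    apply Sigma.hom_ext
    intro i
    rw [← Category.assoc, colimit.ι_desc]
    exact hβ i
  refine ⟨?_⟩
  rw [ShortComplex.ab_exact_iff]
  intro (x₂ : ∐ fam ⟶ S.X₂) hx₂
  have hx₂' : (x₂ : ∐ fam ⟶ S.X₂) ≫ S.g = 0 := hx₂
  have : ∀ i, ∃ y : fam i ⟶ S.X₁, y ≫ S.f = Sigma.ι fam i ≫ x₂ := by
    intro i
    apply exactC i
    show (Sigma.ι fam i ≫ x₂) ≫ S.g = 0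
    rw [Category.assoc, hx₂', Limits.comp_zero]
  choose y hy using this
  refine ⟨Sigma.desc y, ?_⟩
  show Sigma.desc y ≫ S.f = x₂
  apply Sigma.hom_ext
  intro i
  rw [← Category.assoc, colimit.ι_desc]
  exact hy i

end GProj

lemma disk_X_eq (A : 𝒢) (n : ℤ) {m : ℤ} (h : m = n ∨ m = n - 1) : (disk A n).X m = A := if_pos h
lemma disk_isZero (A : 𝒢) (n : ℤ) {m : ℤ} (h : ¬(m = n ∨ m = n - 1)) :
    IsZero ((disk A n).X m) := by
  rw [show (disk A n).X m = 0 from if_neg h]; exact isZero_zero 𝒢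
lemma disk_d_eq (A : 𝒢) (n : ℤ) : (disk A n).d n (n - 1) =
    eqToHom (disk_X_eq A n (Or.inl rfl)) ≫ eqToHom (disk_X_eq A n (Or.inr rfl)).symm :=
  dif_pos ⟨rfl, rfl⟩

lemma disk_d_eq_zero (A : 𝒢) (n : ℤ) {i j : ℤ} (h : ¬(i = n ∧ j = n - 1)) :
    (disk A n).d i j = 0 := dif_neg h

/-- The degreewise components of a chain map `Dⁿ(A) ⟶ P` determined by `φ : A ⟶ P.X n`. -/
noncomputable def diskDescF {A : 𝒢} {n : ℤ} (P : HomologicalComplex 𝒢 (ComplexShape.down ℤ))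
    (φ : A ⟶ P.X n) (m : ℤ) : (disk A n).X m ⟶ P.X m :=
  if h1 : m = n then
    eqToHom (disk_X_eq A n (Or.inl h1)) ≫ φ ≫ eqToHom (congrArg P.X h1.symm)
  else if h2 : m = n - 1 then
    eqToHom (disk_X_eq A n (Or.inr h2)) ≫ (φ ≫ P.d n (n - 1)) ≫ eqToHom (congrArg P.X h2.symm)
  else 0

lemma diskDescF_self {A : 𝒢} {n : ℤ} {P : HomologicalComplex 𝒢 (ComplexShape.down ℤ)}
    (φ : A ⟶ P.X n) {m : ℤ} (hm : m = n) :
    diskDescF P φ m = eqToHom (disk_X_eq A n (Or.inl hm)) ≫ φ ≫ eqToHom (congrArg P.X hm.symm) := by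
  unfold diskDescF; rw [dif_pos hm]

lemma diskDescF_pred {A : 𝒢} {n : ℤ} {P : HomologicalComplex 𝒢 (ComplexShape.down ℤ)}
    (φ : A ⟶ P.X n) {m : ℤ} (hm : m = n - 1) :
    diskDescF P φ m = eqToHom (disk_X_eq A n (Or.inr hm)) ≫ (φ ≫ P.d n (n - 1)) ≫
      eqToHom (congrArg P.X hm.symm) := by
  unfold diskDescF; rw [dif_neg (by omega), dif_pos hm]

lemma diskDescF_zero {A : 𝒢} {n : ℤ} {P : HomologicalComplex 𝒢 (ComplexShape.down ℤ)}
    (φ : A ⟶ P.X n) {m : ℤ} (h1 : ¬ m = n) (h2 : ¬ m = n - 1) :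
    diskDescF P φ m = 0 := by
  unfold diskDescF; rw [dif_neg h1, dif_neg h2]

/-- A chain map `Dⁿ(A) ⟶ P` determined by a morphism `A ⟶ P.X n`. -/
noncomputable def diskDesc {A : 𝒢} {n : ℤ} {P : HomologicalComplex 𝒢 (ComplexShape.down ℤ)}
    (φ : A ⟶ P.X n) : disk A n ⟶ P where
  f m := diskDescF P φ m
  comm' i j hij := by
    have hj : j = i - 1 := by simp [ComplexShape.down] at hij; omega
    subst hj
    by_cases h1 : i = n
    · subst h1
      rw [diskDescF_self φ rfl, diskDescF_pred φ rfl,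
        show (disk A i).d i (i - 1) = eqToHom (disk_X_eq A i (Or.inl rfl)) ≫
          eqToHom (disk_X_eq A i (Or.inr rfl)).symm from dif_pos ⟨rfl, rfl⟩]
      simp
    · by_cases h2 : i = n - 1
      · subst h2
        rw [diskDescF_pred φ rfl, disk_d_eq_zero A n (by omega), zero_comp]
        simp
      · rw [diskDescF_zero φ h1 h2, disk_d_eq_zero A n (by omega), zero_comp, zero_comp]

lemma diskDesc_f {A : 𝒢} {n : ℤ} {P : HomologicalComplex 𝒢 (ComplexShape.down ℤ)}
    (φ : A ⟶ P.X n) (m : ℤ) : (diskDesc φ).f m = diskDescF P φ m := rfl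
noncomputable def diskHomotopy (A : 𝒢) (n : ℤ) : Homotopy (𝟙 (disk A n)) 0 where
  hom i j := if h : i = n - 1 ∧ j = n then
      eqToHom (disk_X_eq A n (Or.inr h.1)) ≫ eqToHom (disk_X_eq A n (Or.inl h.2)).symm
    else 0
  zero i j hij := by
    rw [dif_neg]
    rintro ⟨rfl, rfl⟩
    exact hij (by simp)
  comm i := by
    by_cases hi : i = n
    · subst hi
      rw [dNext_eq _ (show (ComplexShape.down ℤ).Rel i (i - 1) by simp),
        prevD_eq _ (show (ComplexShape.down ℤ).Rel (i + 1) i by simp)]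
      rw [dif_pos (⟨rfl, rfl⟩ : i - 1 = i - 1 ∧ i = i),
        dif_neg (by omega : ¬(i = i - 1 ∧ i + 1 = i)), disk_d_eq]
      simp [eqToHom_trans]
    · by_cases hi2 : i = n - 1
      · subst hi2
        rw [dNext_eq _ (show (ComplexShape.down ℤ).Rel (n-1) (n - 1 - 1) by simp),
          prevD_eq _ (show (ComplexShape.down ℤ).Rel (n - 1 + 1) (n-1) by simp)]
        rw [dif_neg (by omega : ¬(n - 1 - 1 = n - 1 ∧ n - 1 = n)),
          dif_pos (show n - 1 = n - 1 ∧ n - 1 + 1 = n from ⟨rfl, by omega⟩),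
          disk_d_eq_zero A n (by omega : ¬(n - 1 = n ∧ n - 1 - 1 = n - 1)),
          show (disk A n).d (n - 1 + 1) (n - 1) = eqToHom (disk_X_eq A n (Or.inl (by omega)))
            ≫ eqToHom (disk_X_eq A n (Or.inr rfl)).symm from dif_pos ⟨by omega, rfl⟩]
        simp [eqToHom_trans]
      · apply (disk_isZero A n (by tauto)).eq_of_src


section CP


variable {𝒢 : Type*} [Category 𝒢] [Abelian 𝒢] [HasColimits 𝒢] (F : ℤ → HomologicalComplex 𝒢 (ComplexShape.down ℤ))

noncomputable abbrev cmpE (m : ℤ) : (∐ fun n => (F n).X m) ⟶ (∐ F).X m :=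
  sigmaComparison (HomologicalComplex.eval 𝒢 (ComplexShape.down ℤ) m) F

instance cmpE_isIso (m : ℤ) : IsIso (cmpE F m) := by
  change IsIso (sigmaComparison _ _)
  infer_instance

lemma ι_cmpE (n m : ℤ) :
    Sigma.ι (fun n => (F n).X m) n ≫ cmpE F m = (Sigma.ι F n).f m :=
  ι_comp_sigmaComparison (HomologicalComplex.eval 𝒢 (ComplexShape.down ℤ) m) F n

lemma cmpE_d (j k : ℤ) :
    cmpE F j ≫ (∐ F).d j k = Limits.Sigma.map (fun n => (F n).d j k) ≫ cmpE F k := by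
  apply Sigma.hom_ext
  intro n
  rw [← Category.assoc, ι_cmpE, HomologicalComplex.Hom.comm]
  simp [ι_cmpE]

lemma sigma_map_add {f g : ℤ → 𝒢} [HasCoproduct f] [HasCoproduct g]
    (p q : ∀ n, f n ⟶ g n) :
    Limits.Sigma.map p + Limits.Sigma.map q = Limits.Sigma.map (fun n => p n + q n) := by
  apply Sigma.hom_ext
  intro n
  simp [Preadditive.comp_add, Preadditive.add_comp]

/-- A coproduct of contractible complexes is contractible. -/
noncomputable def homotopySigma (h : ∀ n, Homotopy (𝟙 (F n)) 0) : Homotopy (𝟙 (∐ F)) 0 where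
  hom i j := inv (cmpE F i) ≫ Limits.Sigma.map (fun n => (h n).hom i j) ≫ cmpE F j
  zero i j hij := by
    have e1 : (fun n => (h n).hom i j) = fun n => 0 := funext fun n => (h n).zero i j hij
    rw [e1]
    have e2 : Limits.Sigma.map (fun n : ℤ => (0 : (F n).X i ⟶ (F n).X j)) = 0 := by
      apply Sigma.hom_ext; intro n; simp
    rw [e2, zero_comp, comp_zero]
  comm i := by
    rw [dNext_eq _ (show (ComplexShape.down ℤ).Rel i (i - 1) by simp),
      prevD_eq _ (show (ComplexShape.down ℤ).Rel (i + 1) i by simp)]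
    have key1 : (∐ F).d i (i - 1) ≫ inv (cmpE F (i - 1)) =
        inv (cmpE F i) ≫ Limits.Sigma.map (fun n => (F n).d i (i - 1)) := by
      rw [IsIso.eq_inv_comp, ← Category.assoc, cmpE_d, Category.assoc, IsIso.hom_inv_id,
        Category.comp_id]
    have hcomp : (fun n : ℤ => (F n).d i (i - 1) ≫ (h n).hom (i - 1) i
        + (h n).hom i (i + 1) ≫ (F n).d (i + 1) i) = fun n : ℤ => 𝟙 ((F n).X i) := by
      funext n
      have hc := (h n).comm i
      rw [dNext_eq _ (show (ComplexShape.down ℤ).Rel i (i - 1) by simp),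
        prevD_eq _ (show (ComplexShape.down ℤ).Rel (i + 1) i by simp)] at hc
      simpa using hc.symm
    have t1 : (∐ F).d i (i - 1) ≫ (inv (cmpE F (i - 1)) ≫
          Limits.Sigma.map (fun n => (h n).hom (i - 1) i) ≫ cmpE F i) =
        inv (cmpE F i) ≫
          Limits.Sigma.map (fun n => (F n).d i (i - 1) ≫ (h n).hom (i - 1) i) ≫ cmpE F i := by
      rw [← Category.assoc, key1, Category.assoc, ← Limits.Sigma.map_comp_map, Category.assoc]
    have t2 : (inv (cmpE F i) ≫
          Limits.Sigma.map (fun n => (h n).hom i (i + 1)) ≫ cmpE F (i + 1)) ≫ (∐ F).d (i + 1) i =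
        inv (cmpE F i) ≫
          Limits.Sigma.map (fun n => (h n).hom i (i + 1) ≫ (F n).d (i + 1) i) ≫ cmpE F i := by
      rw [Category.assoc, Category.assoc, cmpE_d, ← Limits.Sigma.map_comp_map, Category.assoc]
    rw [t1, t2, ← Preadditive.comp_add, ← Preadditive.add_comp, sigma_map_add, hcomp,
      Limits.Sigma.map_id]
    simp

end CP


section Contractible
variable (P : HomologicalComplex 𝒢 (ComplexShape.down ℤ)) (h : Homotopy (𝟙 P) 0)

lemma homotopy_sum_eq (t : ℤ) :
    P.d t (t - 1) ≫ h.hom (t - 1) t + h.hom t (t + 1) ≫ P.d (t + 1) t = 𝟙 (P.X t) := by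
  have hc := h.comm t
  rw [dNext_eq _ (show (ComplexShape.down ℤ).Rel t (t - 1) by simp),
    prevD_eq _ (show (ComplexShape.down ℤ).Rel (t + 1) t by simp)] at hc
  simpa using hc.symm

lemma ker_comp_B (t : ℤ) :
    kernel.ι (P.d t (t - 1)) ≫ (h.hom t (t + 1) ≫ P.d (t + 1) t) = kernel.ι (P.d t (t - 1)) := by
  have hs := homotopy_sum_eq P h t
  have h0 : kernel.ι (P.d t (t - 1)) ≫ (P.d t (t - 1) ≫ h.hom (t - 1) t) = 0 := by
    rw [← Category.assoc, kernel.condition, zero_comp]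
  calc kernel.ι (P.d t (t - 1)) ≫ (h.hom t (t + 1) ≫ P.d (t + 1) t)
      = kernel.ι (P.d t (t - 1)) ≫ (P.d t (t - 1) ≫ h.hom (t - 1) t)
        + kernel.ι (P.d t (t - 1)) ≫ (h.hom t (t + 1) ≫ P.d (t + 1) t) := by
        rw [h0, zero_add]
    _ = kernel.ι (P.d t (t - 1)) ≫ 𝟙 _ := by rw [← Preadditive.comp_add, hs]
    _ = kernel.ι (P.d t (t - 1)) := Category.comp_id _

end Contractible
section Backward
universe v₁ u₁
variable {𝒞 : Type u₁} [Category.{v₁} 𝒞] [Abelian 𝒞] [HasColimits 𝒞]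
variable (P : HomologicalComplex 𝒞 (ComplexShape.down ℤ)) (h : Homotopy (𝟙 P) 0)

/-- The canonical map `ker(d_{n-1}) ⟶ P_n` for a contractible complex, given by the
contracting homotopy. -/
noncomputable def diskφ (n : ℤ) : kernel (P.d (n - 1) (n - 1 - 1)) ⟶ P.X n :=
  kernel.ι _ ≫ h.hom (n - 1) n

lemma diskφ_d (n : ℤ) :
    diskφ P h n ≫ P.d n (n - 1) = kernel.ι (P.d (n - 1) (n - 1 - 1)) := by
  have key := ker_comp_B P h (n - 1)
  rw [show n - 1 + 1 = n from by omega] at key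
  rw [diskφ, Category.assoc]
  exact key

/-- The chain map `∐ₙ Dⁿ(ker d_{n-1}) ⟶ P`. -/
noncomputable def toP : (∐ fun n : ℤ => disk (kernel (P.d (n - 1) (n - 1 - 1))) n) ⟶ P :=
  Sigma.desc fun n => diskDesc (diskφ P h n)

lemma toP_isIso : IsIso (toP P h) := by
  have : ∀ m : ℤ, IsIso ((toP P h).f m) := by
    intro m
    obtain ⟨u, rfl⟩ : ∃ u : ℤ, m = u - 1 := ⟨m + 1, by omega⟩
    set comps : ℤ → 𝒞 := fun n => (disk (kernel (P.d (n - 1) (n - 1 - 1))) n).X (u - 1)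
      with hcomps
    set w : (∐ comps) ⟶ P.X (u - 1) := Sigma.desc (fun n => diskDescF P (diskφ P h n) (u - 1))
      with hw
    have hFw : (toP P h).f (u - 1) = inv (cmpE _ (u - 1)) ≫ w := by
      rw [IsIso.eq_inv_comp]
      apply Sigma.hom_ext
      intro n
      rw [← Category.assoc, ι_cmpE, hw, colimit.ι_desc]
      have h1 : (Sigma.ι (fun n : ℤ => disk (kernel (P.d (n - 1) (n - 1 - 1))) n) n) ≫ toP P h
          = diskDesc (diskφ P h n) := colimit.ι_desc _ _
      rw [← HomologicalComplex.comp_f, h1]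
      rfl
    have sum : P.d (u - 1) (u - 1 - 1) ≫ h.hom (u - 1 - 1) (u - 1)
        + h.hom (u - 1) u ≫ P.d u (u - 1) = 𝟙 (P.X (u - 1)) := by
      have hs := homotopy_sum_eq P h (u - 1)
      rwa [show u - 1 + 1 = u from by omega] at hs
    have cond1 : P.d (u - 1) (u - 1 - 1) ≫ P.d (u - 1 - 1) (u - 1 - 1 - 1) = 0 := P.d_comp_d _ _ _
    have cond2 : (h.hom (u - 1) u ≫ P.d u (u - 1)) ≫ P.d (u - 1) (u - 1 - 1) = 0 := by
      rw [Category.assoc, P.d_comp_d, comp_zero]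
    set g₁ : P.X (u - 1) ⟶ kernel (P.d (u - 1 - 1) (u - 1 - 1 - 1)) :=
      kernel.lift _ (P.d (u - 1) (u - 1 - 1)) cond1 with hg₁
    set g₂ : P.X (u - 1) ⟶ kernel (P.d (u - 1) (u - 1 - 1)) := kernel.lift _ _ cond2 with hg₂
    have e1 : kernel (P.d (u - 1 - 1) (u - 1 - 1 - 1)) = comps (u - 1) :=
      (disk_X_eq _ (u - 1) (Or.inl rfl)).symm
    have e2 : kernel (P.d (u - 1) (u - 1 - 1)) = comps u :=
      (disk_X_eq _ u (Or.inr rfl)).symm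
    set v : P.X (u - 1) ⟶ ∐ comps :=
      g₁ ≫ eqToHom e1 ≫ Sigma.ι comps (u - 1) + g₂ ≫ eqToHom e2 ≫ Sigma.ι comps u with hv
    have wι1 : Sigma.ι comps (u - 1) ≫ w = eqToHom e1.symm ≫ diskφ P h (u - 1) := by
      rw [hw, colimit.ι_desc]
      show diskDescF P (diskφ P h (u - 1)) (u - 1) = _
      rw [diskDescF_self _ rfl]
      simp
    have wι2 : Sigma.ι comps u ≫ w = eqToHom e2.symm ≫ kernel.ι (P.d (u - 1) (u - 1 - 1)) := by
      rw [hw, colimit.ι_desc]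
      show diskDescF P (diskφ P h u) (u - 1) = _
      rw [diskDescF_pred _ rfl, diskφ_d]
      simp
    have f1 : g₁ ≫ kernel.ι _ = P.d (u - 1) (u - 1 - 1) := kernel.lift_ι _ _ _
    have f2 : g₂ ≫ kernel.ι _ = h.hom (u - 1) u ≫ P.d u (u - 1) := kernel.lift_ι _ _ _
    have ιB : kernel.ι (P.d (u - 1) (u - 1 - 1)) ≫ (h.hom (u - 1) u ≫ P.d u (u - 1))
        = kernel.ι (P.d (u - 1) (u - 1 - 1)) := by
      have hk := ker_comp_B P h (u - 1)
      rwa [show u - 1 + 1 = u from by omega] at hk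
    have hA : diskφ P h (u - 1) ≫ (P.d (u - 1) (u - 1 - 1) ≫ h.hom (u - 1 - 1) (u - 1))
        = diskφ P h (u - 1) := by
      rw [← Category.assoc, diskφ_d]
      rfl
    have dφB : diskφ P h (u - 1) ≫ (h.hom (u - 1) u ≫ P.d u (u - 1)) = 0 := by
      have hsum : diskφ P h (u - 1) ≫ (P.d (u - 1) (u - 1 - 1) ≫ h.hom (u - 1 - 1) (u - 1))
          + diskφ P h (u - 1) ≫ (h.hom (u - 1) u ≫ P.d u (u - 1)) = diskφ P h (u - 1) := by
        rw [← Preadditive.comp_add, sum, Category.comp_id]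
      rw [hA] at hsum
      rwa [add_eq_left] at hsum
    have dφg₁ : diskφ P h (u - 1) ≫ g₁ = 𝟙 _ := by
      rw [← cancel_mono (kernel.ι (P.d (u - 1 - 1) (u - 1 - 1 - 1))), Category.assoc, f1, diskφ_d,
        Category.id_comp]
    have dφg₂ : diskφ P h (u - 1) ≫ g₂ = 0 := by
      rw [← cancel_mono (kernel.ι (P.d (u - 1) (u - 1 - 1))), Category.assoc, f2, dφB, zero_comp]
    have lg₁ : kernel.ι (P.d (u - 1) (u - 1 - 1)) ≫ g₁ = 0 := by
      rw [← cancel_mono (kernel.ι (P.d (u - 1 - 1) (u - 1 - 1 - 1))), Category.assoc, f1,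
        kernel.condition, zero_comp]
    have lg₂ : kernel.ι (P.d (u - 1) (u - 1 - 1)) ≫ g₂ = 𝟙 _ := by
      rw [← cancel_mono (kernel.ι (P.d (u - 1) (u - 1 - 1))), Category.assoc, f2, ιB,
        Category.id_comp]
    have vw : v ≫ w = 𝟙 (P.X (u - 1)) := by
      rw [hv, Preadditive.add_comp, Category.assoc, Category.assoc, Category.assoc,
        Category.assoc, wι1, wι2]
      simp only [eqToHom_trans_assoc, eqToHom_refl, Category.id_comp]
      rw [diskφ, ← Category.assoc, f1, f2]
      exact sum
    have wv : w ≫ v = 𝟙 (∐ comps) := by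
      apply Sigma.hom_ext
      intro n
      rw [Category.comp_id, ← Category.assoc]
      by_cases hn : n = u - 1
      · subst hn
        rw [wι1, Category.assoc, hv, Preadditive.comp_add,
          ← Category.assoc (diskφ P h (u - 1)) g₁, dφg₁, ← Category.assoc (diskφ P h (u - 1)) g₂, dφg₂,
          Category.id_comp, zero_comp, add_zero, eqToHom_trans_assoc, eqToHom_refl,
          Category.id_comp]
      · by_cases hn2 : n = u
        · subst hn2
          rw [wι2, Category.assoc, hv, Preadditive.comp_add,
            ← Category.assoc (kernel.ι (P.d (n - 1) (n - 1 - 1))) g₁, lg₁,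
            ← Category.assoc (kernel.ι (P.d (n - 1) (n - 1 - 1))) g₂, lg₂,
            Category.id_comp, zero_comp, zero_add, eqToHom_trans_assoc, eqToHom_refl,
            Category.id_comp]
        · exact ((disk_isZero _ n (by omega)).eq_of_src _ _)
    have : IsIso w := ⟨v, wv, vw⟩
    rw [hFw]
    infer_instance
  exact HomologicalComplex.Hom.isIso_of_components _

end Backward


/-- Let `G` be a generator of a Grothendieck category `𝒢` and `P` a chain
complex over `𝒢`.  Then `P` is isomorphic to a coproduct `⊕_{n∈ℤ} D^n(P_n)` of disks on
`G`-projective objects if and only if `P` is a contractible complex all of whose components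
are `G`-projective. -/
theorem stmt_18 [HasColimits 𝒢] [AB5 𝒢] (G : 𝒢) (hG : IsSeparator G)
    (P : HomologicalComplex 𝒢 (ComplexShape.down ℤ)) :
    (∃ fam : ℤ → 𝒢, (∀ n, GProjective G (fam n)) ∧
      Nonempty (P ≅ ∐ (fun n : ℤ => disk (fam n) n))) ↔
    (Nonempty (Homotopy (𝟙 P) 0) ∧ ∀ n, GProjective G (P.X n)) := by
  constructor
  · rintro ⟨fam, hfam, ⟨e⟩⟩
    constructor
    · have hs : Homotopy (𝟙 (∐ fun n : ℤ => disk (fam n) n)) 0 :=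
        homotopySigma _ (fun n => diskHomotopy (fam n) n)
      exact ⟨((Homotopy.ofEq (by simp)).trans ((hs.compLeft e.hom).compRight e.inv)).trans
        (Homotopy.ofEq (by simp))⟩
    · intro m
      have hcomp : ∀ n : ℤ, GProjective G ((disk (fam n) n).X m) := fun n => by
        by_cases hc : m = n ∨ m = n - 1
        · exact (hfam n).of_iso (eqToIso (disk_X_eq (fam n) n hc))
        · exact gprojective_of_isZero (disk_isZero (fam n) n hc)
      have hsig := GProjective.sigma (G := G) (fun n => (disk (fam n) n).X m) hcomp
      exact hsig.of_iso ((HomologicalComplex.eval 𝒢 (ComplexShape.down ℤ) m).mapIso e ≪≫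
        (asIso (cmpE (fun n : ℤ => disk (fam n) n) m)).symm)
  · rintro ⟨⟨h⟩, hP⟩
    refine ⟨fun n => kernel (P.d (n - 1) (n - 1 - 1)), ?_, ?_⟩
    · intro n
      have cond : (h.hom (n - 1) (n - 1 + 1) ≫ P.d (n - 1 + 1) (n - 1)) ≫
          P.d (n - 1) (n - 1 - 1) = 0 := by
        rw [Category.assoc, P.d_comp_d, comp_zero]
      refine GProjective.of_retract (kernel.ι (P.d (n - 1) (n - 1 - 1)))
        (kernel.lift _ (h.hom (n - 1) (n - 1 + 1) ≫ P.d (n - 1 + 1) (n - 1)) cond) ?_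
        (hP (n - 1))
      rw [← cancel_mono (kernel.ι (P.d (n - 1) (n - 1 - 1))), Category.assoc, kernel.lift_ι,
        Category.id_comp]
      exact ker_comp_B P h (n - 1)
    · have := toP_isIso P h
      exact ⟨(asIso (toP P h)).symm⟩
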